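/- arXiv:1808.10408 — 3 statements merged into one kernel-verified Lean document; each statement's English description precedes it below -/
import Mathlib

section
/- Let f(z) = z^s·R(z^n) with R a polynomial, s, n positive integers and gcd(s,n) = 1. Then there exists p ≥ 1 and a polynomial P such that f^p(z) = z·P(z^n). Consequently f^p commutes with multiplication by any n-th root of unity. -/
/-- If f(z) = z^s·R(zⁿ) with gcd(s,n) = 1, then some iterate f^p has the form
z·P(zⁿ), and consequently f^p commutes with multiplication by any n-th root of
unity. -/
theorem iterate_commutes_with_roots_of_unity (R : Polynomial ℂ) (s n : ℕ)
    (hs : 0 < s) (hn : 0 < n) (hsn : Nat.Coprime s n) :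
    ∃ p : ℕ, 1 ≤ p ∧ ∃ P : Polynomial ℂ,
      (∀ z : ℂ, (fun w : ℂ => w ^ s * R.eval (w ^ n))^[p] z = z * P.eval (z ^ n)) ∧
      (∀ ζ : ℂ, ζ ^ n = 1 → ∀ z : ℂ,
        (fun w : ℂ => w ^ s * R.eval (w ^ n))^[p] (ζ * z)
          = ζ * (fun w : ℂ => w ^ s * R.eval (w ^ n))^[p] z) := by
  set f : ℂ → ℂ := fun w => w ^ s * R.eval (w ^ n) with hf
  have key : ∀ k : ℕ, ∃ Q : Polynomial ℂ, ∀ z : ℂ,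
      f^[k] z = z ^ (s ^ k) * Q.eval (z ^ n) := by
    intro k
    induction k with
    | zero => exact ⟨1, by simp⟩
    | succ k ih =>
      obtain ⟨Q, hQ⟩ := ih
      refine ⟨R ^ (s ^ k) * Q.comp (Polynomial.X ^ s * R ^ n), fun z => ?_⟩
      rw [Function.iterate_succ_apply, hQ]
      simp only [Polynomial.eval_mul, Polynomial.eval_pow, Polynomial.eval_comp,
        Polynomial.eval_X, hf]
      have h1 : (z ^ s * R.eval (z ^ n)) ^ s ^ k
          = z ^ s ^ (k + 1) * (R.eval (z ^ n)) ^ s ^ k := by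
        rw [mul_pow, ← pow_mul, pow_succ']
      have h2 : (z ^ s * R.eval (z ^ n)) ^ n
          = (z ^ n) ^ s * (R.eval (z ^ n)) ^ n := by
        rw [mul_pow, ← pow_mul, mul_comm s n, pow_mul]
      rw [h1, h2]; ring
  obtain ⟨Q, hQ⟩ := key n.totient
  have hp : 1 ≤ n.totient := Nat.totient_pos.mpr hn
  have hmod : s ^ n.totient ≡ 1 [MOD n] := Nat.ModEq.pow_totient hsn
  have hone : 1 ≤ s ^ n.totient := Nat.one_le_pow _ _ hs
  obtain ⟨m, hm⟩ := (Nat.modEq_iff_dvd' hone).mp hmod.symm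
  have hsp : s ^ n.totient = n * m + 1 := by omega
  have hmain : ∀ z : ℂ, f^[n.totient] z
      = z * (Polynomial.X ^ m * Q).eval (z ^ n) := by
    intro z
    rw [hQ, hsp, pow_add, pow_mul, pow_one]
    simp only [Polynomial.eval_mul, Polynomial.eval_pow, Polynomial.eval_X]
    ring
  refine ⟨n.totient, hp, Polynomial.X ^ m * Q, hmain, fun ζ hζ z => ?_⟩
  rw [hmain, hmain, mul_pow, hζ, one_mul]
  ring
end

section
/- Let f(z) = z^2 + c with c ≠ 0. If σ(z) = az + b is a linear (degree-one) polynomial and σ ∘ f^n = f^n ∘ σ for some n ≥ 1, then σ is the identity map. -/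
/-!
Write `f^[k + 1] z = S (z ^ 2)`, where `S` is monic of degree `2 ^ k` with next coefficient
`2 ^ k * c`. Since `f^[k + 1]` is even, commuting with `σ z = a * z + b` makes it periodic with
period `2 * b`; a nonconstant polynomial has no nonzero period, so `b = 0`. Then
`f^[k + 1] (a * z) = a * f^[k + 1] z` forces `a ^ d = a` for every degree `d` carrying a nonzero
coefficient, and the degrees `2 ^ (k + 1)` and `2 ^ (k + 1) - 2` give
`a ^ 2 = 1` and then `a = 1`.
-/

open Polynomial

namespace Polynomial

variable {R : Type*} [CommRing R]

theorem natDegree_eq_zero_of_periodic [IsDomain R] [CharZero R] {p : R[X]} {t : R} (ht : t ≠ 0)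
    (hper : Function.Periodic (fun x => p.eval x) t) : p.natDegree = 0 := by
  have hroots : {x | (p - C (p.eval 0)).IsRoot x}.Infinite := by
    refine Set.infinite_of_injective_forall_mem (f := fun k : ℕ => (k : R) * t) ?_ fun k => ?_
    · exact fun i j hij => Nat.cast_injective (mul_right_cancel₀ ht hij)
    · simp [hper.nat_mul_eq k]
  rw [sub_eq_zero.mp (eq_zero_of_infinite_isRoot _ hroots), natDegree_C]

theorem pow_eq_of_eval_mul_eq [IsDomain R] [Infinite R] {p : R[X]} {u v : R}
    (h : ∀ x, p.eval (u * x) = v * p.eval x) {k : ℕ} (hk : p.coeff k ≠ 0) : u ^ k = v := by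
  have hcomp : p.comp (C u * X) = C v * p := funext fun x => by simp [h]
  have := congrArg (coeff · k) hcomp
  simp only [comp_C_mul_X_coeff, coeff_C_mul] at this
  exact mul_left_cancel₀ hk (by rw [this, mul_comm])

theorem nextCoeff_add_C {p : R[X]} (hp : 1 < p.natDegree) (a : R) :
    (p + C a).nextCoeff = p.nextCoeff := by
  rw [nextCoeff_of_natDegree_pos (by rw [natDegree_add_C]; omega), natDegree_add_C,
    nextCoeff_of_natDegree_pos (by omega), coeff_add, coeff_C, if_neg (by omega), add_zero]

end Polynomial

theorem Function.Even.periodic_of_comm_affine {K : Type*} [Field K] {F : K → K} {a b : K}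
    (heven : Function.Even F) (ha : a ≠ 0) (h : ∀ z, a * F z + b = F (a * z + b)) :
    Function.Periodic F (2 * b) := by
  intro w
  have hz : a * ((w + b) / a) + b = w + 2 * b := by field_simp; ring
  have hnz : a * -((w + b) / a) + b = -w := by field_simp; ring
  rw [← hz, ← h, ← heven, h, hnz, heven]

section QuadraticFamily

variable {R : Type*} [CommRing R]

noncomputable def quadIterSq (c : R) : ℕ → R[X]
  | 0 => X + C c
  | k + 1 => quadIterSq c k ^ 2 + C c

theorem iterate_succ_eq_eval_quadIterSq (c z : R) (k : ℕ) :
    (fun w => w ^ 2 + c)^[k + 1] z = (quadIterSq c k).eval (z ^ 2) := by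
  induction k with
  | zero => simp [quadIterSq]
  | succ k ih => rw [Function.iterate_succ_apply', ih]; simp [quadIterSq]

variable [Nontrivial R]

theorem monic_quadIterSq_and_natDegree (c : R) (k : ℕ) :
    (quadIterSq c k).Monic ∧ (quadIterSq c k).natDegree = 2 ^ k := by
  induction k with
  | zero => exact ⟨monic_X_add_C c, natDegree_X_add_C c⟩
  | succ k ih =>
    have hdeg : (quadIterSq c k ^ 2).natDegree = 2 ^ (k + 1) := by
      rw [ih.1.natDegree_pow, ih.2, pow_succ']
    refine ⟨(ih.1.pow 2).add_of_left ?_, by rw [quadIterSq, natDegree_add_C, hdeg]⟩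
    rw [degree_eq_natDegree (ih.1.pow 2).ne_zero, hdeg]
    exact degree_C_le.trans_lt (by exact_mod_cast Nat.two_pow_pos _)

theorem monic_quadIterSq (c : R) (k : ℕ) : (quadIterSq c k).Monic :=
  (monic_quadIterSq_and_natDegree c k).1

theorem natDegree_quadIterSq (c : R) (k : ℕ) : (quadIterSq c k).natDegree = 2 ^ k :=
  (monic_quadIterSq_and_natDegree c k).2

theorem nextCoeff_quadIterSq (c : R) (k : ℕ) : (quadIterSq c k).nextCoeff = 2 ^ k * c := by
  induction k with
  | zero => simp [quadIterSq, nextCoeff_X_add_C]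
  | succ k ih =>
    have hdeg : 1 < (quadIterSq c k ^ 2).natDegree := by
      rw [(monic_quadIterSq c k).natDegree_pow, natDegree_quadIterSq]
      have := Nat.one_le_two_pow (n := k)
      omega
    rw [quadIterSq, nextCoeff_add_C hdeg, (monic_quadIterSq c k).nextCoeff_pow, ih, nsmul_eq_mul,
      pow_succ]
    push_cast
    ring

end QuadraticFamily

/-- For f(z) = z² + c with c ≠ 0, any linear polynomial σ(z) = az + b commuting
with some iterate of f is the identity. -/
theorem quadratic_trivial_linear_symmetry (c a b : ℂ) (hc : c ≠ 0) (ha : a ≠ 0)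
    (n : ℕ) (hn : 1 ≤ n)
    (h : ∀ z : ℂ, a * ((fun w : ℂ => w ^ 2 + c)^[n] z) + b
        = (fun w : ℂ => w ^ 2 + c)^[n] (a * z + b)) :
    a = 1 ∧ b = 0 := by
  obtain ⟨m, rfl⟩ : ∃ m, n = m + 1 := ⟨n - 1, by omega⟩
  set P := expand ℂ 2 (quadIterSq c m)
  have hP : ∀ z, (fun w => w ^ 2 + c)^[m + 1] z = P.eval z := fun z => by
    rw [iterate_succ_eq_eval_quadIterSq, expand_eval]
  simp only [hP] at h
  have hb : b = 0 := by
    have heven : Function.Even fun z => P.eval z := fun z => by simp [P, expand_eval]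
    have hdeg : P.natDegree ≠ 0 := by simp [P, natDegree_expand, natDegree_quadIterSq]
    by_contra hb
    exact hdeg (natDegree_eq_zero_of_periodic (mul_ne_zero two_ne_zero hb)
      (heven.periodic_of_comm_affine ha h))
  subst hb
  have hscale : ∀ z, P.eval (a * z) = a * P.eval z := fun z => by simpa using (h z).symm
  have hlead : a ^ (2 ^ m * 2) = a := pow_eq_of_eval_mul_eq hscale (by
    simp [P, ← natDegree_quadIterSq c m, monic_quadIterSq])
  have hnext : a ^ ((2 ^ m - 1) * 2) = a := pow_eq_of_eval_mul_eq hscale (by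
    have hpos : 0 < (quadIterSq c m).natDegree := by simp [natDegree_quadIterSq]
    rw [coeff_expand_mul two_pos, ← natDegree_quadIterSq c m, ← nextCoeff_of_natDegree_pos hpos,
      nextCoeff_quadIterSq]
    exact mul_ne_zero (pow_ne_zero _ two_ne_zero) hc)
  have hsq : a ^ 2 = 1 := by
    have : (a ^ 2) ^ 2 ^ m = (a ^ 2) ^ (2 ^ m - 1) * a ^ 2 := by
      rw [← pow_succ, Nat.sub_add_cancel Nat.one_le_two_pow]
    rw [← pow_mul', hlead, ← pow_mul', hnext] at this
    exact (mul_right_eq_self₀.mp this.symm).resolve_right ha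
  exact ⟨by rw [← hnext, pow_mul', hsq, one_pow], rfl⟩
end

section
/- Let S : U → V be an orientation-preserving conformal local symmetry of a compact set A ⊆ C (i.e., S(U ∩ A) = V ∩ A), and suppose x ∈ U ∩ A is such that A is asymptotically self-similar at x with scale ρ and limit model L. Then A is asymptotically self-similar at S(x) with scale ρ and limit model S'(x)·L. -/
open Pointwise

/-- Truncation: X_r = (X ∩ D_r) ∪ ∂D_r. -/
noncomputable def trunc (r : ℝ) (X : Set ℂ) : Set ℂ :=
  (X ∩ Metric.closedBall 0 r) ∪ Metric.sphere (0 : ℂ) r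

/-- B is asymptotically ρ-self-similar about 0 with limit model L. -/
def AsympSelfSimilar (ρ : ℂ) (L B : Set ℂ) : Prop :=
  ∃ r > 0, Filter.Tendsto
    (fun n : ℕ => Metric.hausdorffDist (trunc r ((ρ ^ n) • B)) (trunc r L))
    Filter.atTop (nhds 0)

/-! Near `x` the symmetry `S` maps `A` into `A` and, being injective on `U`, also pulls `A`
back into `A`; moreover `S a - S x = S'(x) (a - x) + o(a - x)`. Hence `S'(x) • (A - x)` and
`A - S x` approximate each other to first order at `0`. The blow-ups by `ρⁿ` only see shrinking
neighbourhoods of `0`, so truncated blow-ups of two such sets become Hausdorff-close, and the limit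
model of `S'(x) • (A - x)` is `S'(x) • L` because multiplication by `S'(x)` is a similarity. -/

open Metric Filter Topology Asymptotics

theorem hausdorffEDist_smul₀ {𝕜 E : Type*} [NormedDivisionRing 𝕜] [SeminormedAddCommGroup E]
    [Module 𝕜 E] [NormSMulClass 𝕜 E] {c : 𝕜} (hc : c ≠ 0) (s t : Set E) :
    hausdorffEDist (c • s) (c • t) = ‖c‖₊ • hausdorffEDist s t := by
  have h : ∀ u v : Set E, ⨆ x ∈ c • u, infEDist x (c • v) = ‖c‖₊ * ⨆ x ∈ u, infEDist x v := by
    intro u v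
    rw [← Set.image_smul, iSup_image]
    simp only [infEDist_smul₀ hc, ENNReal.smul_def, smul_eq_mul, ENNReal.mul_iSup]
  rw [hausdorffEDist_def, hausdorffEDist_def, h, h, ENNReal.smul_def, smul_eq_mul,
    mul_max_of_nonneg _ _ zero_le]

theorem hausdorffDist_smul₀ {𝕜 E : Type*} [NormedDivisionRing 𝕜] [SeminormedAddCommGroup E]
    [Module 𝕜 E] [NormSMulClass 𝕜 E] {c : 𝕜} (hc : c ≠ 0) (s t : Set E) :
    hausdorffDist (c • s) (c • t) = ‖c‖ * hausdorffDist s t := by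
  simp only [hausdorffDist, hausdorffEDist_smul₀ hc, ENNReal.toReal_smul, NNReal.smul_def,
    coe_nnnorm, smul_eq_mul]

theorem exists_mem_sphere_dist_eq {E : Type*} [NormedAddCommGroup E] [NormedSpace ℝ E]
    [Nontrivial E] {z : E} {r : ℝ} (hz : ‖z‖ ≤ r) :
    ∃ s ∈ sphere (0 : E) r, dist z s = r - ‖z‖ := by
  rcases eq_or_ne z 0 with rfl | hz₀
  · obtain ⟨s, hs⟩ := exists_norm_eq E (norm_zero (E := E) ▸ hz)
    exact ⟨s, by simpa using hs, by simp [hs]⟩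
  · have hzpos : 0 < ‖z‖ := norm_pos_iff.2 hz₀
    have hr : 0 ≤ r := hzpos.le.trans hz
    refine ⟨(r / ‖z‖) • z, ?_, ?_⟩
    · rw [mem_sphere_zero_iff_norm, norm_smul, Real.norm_eq_abs,
        abs_of_nonneg (div_nonneg hr hzpos.le), div_mul_cancel₀ _ hzpos.ne']
    · have hsub : z - (r / ‖z‖) • z = (1 - r / ‖z‖) • z := by rw [sub_smul, one_smul]
      rw [dist_eq_norm, hsub, norm_smul, Real.norm_eq_abs,
        abs_of_nonpos (by rw [sub_nonpos, one_le_div hzpos]; exact hz), neg_sub, sub_mul,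
        div_mul_cancel₀ _ hzpos.ne', one_mul]

theorem trunc_smul {c : ℂ} (hc : c ≠ 0) (r : ℝ) (X : Set ℂ) :
    trunc (‖c‖ * r) (c • X) = c • trunc r X := by
  simp only [trunc, Set.smul_set_union, Set.smul_set_inter₀ hc, smul_closedBall' hc,
    smul_sphere' hc, smul_zero]

section Trunc

variable {r η : ℝ}

theorem hausdorffEDist_trunc_ne_top (hr : 0 ≤ r) (X Y : Set ℂ) :
    hausdorffEDist (trunc r X) (trunc r Y) ≠ ⊤ := by
  have hsub : ∀ Z, trunc r Z ⊆ closedBall 0 r := fun Z =>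
    Set.union_subset Set.inter_subset_right sphere_subset_closedBall
  have hne : ∀ Z, (trunc r Z).Nonempty := fun Z =>
    ((NormedSpace.sphere_nonempty (x := (0 : ℂ))).2 hr).mono Set.subset_union_right
  exact hausdorffEDist_ne_top_of_nonempty_of_bounded (hne X) (hne Y)
    (isBounded_closedBall.subset (hsub X)) (isBounded_closedBall.subset (hsub Y))

theorem exists_mem_trunc_dist_le {X Y : Set ℂ} (hη : 0 ≤ η)
    (h : ∀ z ∈ X, ‖z‖ ≤ r → ∃ y ∈ Y, dist z y ≤ η) :
    ∀ z ∈ trunc r X, ∃ y ∈ trunc r Y, dist z y ≤ η := by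
  rintro z (⟨hzX, hzr⟩ | hzr)
  · rw [mem_closedBall_zero_iff] at hzr
    obtain ⟨y, hyY, hzy⟩ := h z hzX hzr
    by_cases hyr : ‖y‖ ≤ r
    · exact ⟨y, Or.inl ⟨hyY, mem_closedBall_zero_iff.2 hyr⟩, hzy⟩
    · -- the sphere is at distance `r - ‖z‖ < ‖y‖ - ‖z‖ ≤ dist z y` from `z`
      obtain ⟨s, hs, hzs⟩ := exists_mem_sphere_dist_eq hzr
      refine ⟨s, Or.inr hs, ?_⟩
      have hyz := norm_sub_norm_le y z
      rw [← dist_eq_norm, dist_comm] at hyz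
      linarith [not_le.1 hyr]
  · exact ⟨z, Or.inr hzr, by simpa using hη⟩

theorem hausdorffDist_trunc_le {X Y : Set ℂ} (hη : 0 ≤ η)
    (hXY : ∀ z ∈ X, ‖z‖ ≤ r → ∃ y ∈ Y, dist z y ≤ η)
    (hYX : ∀ z ∈ Y, ‖z‖ ≤ r → ∃ y ∈ X, dist z y ≤ η) :
    hausdorffDist (trunc r X) (trunc r Y) ≤ η :=
  hausdorffDist_le_of_mem_dist hη (exists_mem_trunc_dist_le hη hXY)
    (exists_mem_trunc_dist_le hη hYX)

end Trunc

def ApproxAtZero {E : Type*} [SeminormedAddCommGroup E] (B B' : Set E) : Prop :=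
  ∀ ε > 0, ∀ᶠ w in 𝓝 (0 : E), w ∈ B → ∃ w' ∈ B', ‖w - w'‖ ≤ ε * ‖w‖

theorem ApproxAtZero.eventually_smul_pow {𝕜 E : Type*} [NormedField 𝕜]
    [SeminormedAddCommGroup E] [NormedSpace 𝕜 E] {B B' : Set E} (h : ApproxAtZero B B')
    {ρ : 𝕜} (hρ : 1 < ‖ρ‖) {r η : ℝ} (hr : 0 < r) (hη : 0 < η) :
    ∀ᶠ n : ℕ in atTop, ∀ z ∈ ρ ^ n • B, ‖z‖ ≤ r → ∃ y ∈ ρ ^ n • B', dist z y ≤ η := by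
  obtain ⟨δ, hδ, hB⟩ := Metric.eventually_nhds_iff.1 (h (η / r) (div_pos hη hr))
  filter_upwards [(tendsto_pow_atTop_atTop_of_one_lt hρ).eventually_gt_atTop (r / δ)]
    with n hn
  rintro _ ⟨w, hw, rfl⟩ hwr
  rw [norm_smul, norm_pow] at hwr
  have hwδ : ‖w‖ < δ := by
    rw [div_lt_iff₀ hδ] at hn
    nlinarith [norm_nonneg w]
  obtain ⟨w', hw', hww'⟩ := hB (by simpa using hwδ) hw
  refine ⟨ρ ^ n • w', Set.smul_mem_smul_set hw', ?_⟩
  calc dist (ρ ^ n • w) (ρ ^ n • w') = ‖ρ‖ ^ n * ‖w - w'‖ := by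
        rw [dist_smul₀, dist_eq_norm, norm_pow]
    _ ≤ ‖ρ‖ ^ n * (η / r * ‖w‖) := by gcongr
    _ = η / r * (‖ρ‖ ^ n * ‖w‖) := by ring
    _ ≤ η / r * r := by gcongr
    _ = η := div_mul_cancel₀ _ hr.ne'

theorem tendsto_hausdorffDist_trunc_smul_pow {B B' : Set ℂ} (hBB' : ApproxAtZero B B')
    (hB'B : ApproxAtZero B' B) {ρ : ℂ} (hρ : 1 < ‖ρ‖) {r : ℝ} (hr : 0 < r) :
    Tendsto (fun n : ℕ => hausdorffDist (trunc r (ρ ^ n • B)) (trunc r (ρ ^ n • B')))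
      atTop (𝓝 0) := by
  refine tendsto_order.2 ⟨fun a ha => Eventually.of_forall fun n =>
    ha.trans_le hausdorffDist_nonneg, fun a ha => ?_⟩
  filter_upwards [hBB'.eventually_smul_pow hρ hr (half_pos ha),
    hB'B.eventually_smul_pow hρ hr (half_pos ha)] with n h₁ h₂
  exact (hausdorffDist_trunc_le (half_pos ha).le h₁ h₂).trans_lt (half_lt_self ha)

theorem AsympSelfSimilar.of_approxAtZero {ρ : ℂ} {L B B' : Set ℂ}
    (h : AsympSelfSimilar ρ L B) (hρ : 1 < ‖ρ‖) (hBB' : ApproxAtZero B B')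
    (hB'B : ApproxAtZero B' B) : AsympSelfSimilar ρ L B' := by
  obtain ⟨r, hr, hL⟩ := h
  refine ⟨r, hr, squeeze_zero (fun n => hausdorffDist_nonneg)
    (fun n => hausdorffDist_triangle (hausdorffEDist_trunc_ne_top hr.le _ (ρ ^ n • B))) ?_⟩
  simpa using (tendsto_hausdorffDist_trunc_smul_pow hB'B hBB' hρ hr).add hL

theorem AsympSelfSimilar.smul {ρ c : ℂ} {L B : Set ℂ} (h : AsympSelfSimilar ρ L B)
    (hc : c ≠ 0) : AsympSelfSimilar ρ (c • L) (c • B) := by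
  obtain ⟨r, hr, hL⟩ := h
  refine ⟨‖c‖ * r, mul_pos (norm_pos_iff.2 hc) hr, ?_⟩
  simp_rw [smul_comm _ c B, trunc_smul hc, hausdorffDist_smul₀ hc]
  simpa using hL.const_mul ‖c‖

section Derivative

variable {𝕜 : Type*} [NontriviallyNormedField 𝕜] {f : 𝕜 → 𝕜} {c x : 𝕜} {A A' : Set 𝕜}

theorem approxAtZero_smul_image_sub (hf : HasDerivAt f c x) (hc : c ≠ 0)
    (hA : ∀ᶠ a in 𝓝 x, a ∈ A → f a ∈ A') :
    ApproxAtZero (c • ((· - x) '' A)) ((· - f x) '' A') := by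
  intro ε hε
  have hlin := (hasDerivAt_iff_isLittleO.1 hf).def (mul_pos hε (norm_pos_iff.2 hc))
  have hlim : Tendsto (fun w => x + c⁻¹ * w) (𝓝 0) (𝓝 x) :=
    (by fun_prop : Continuous fun w => x + c⁻¹ * w).tendsto' 0 x (by simp)
  filter_upwards [hlim.eventually (hA.and hlin)] with w hw
  rintro ⟨_, ⟨a, ha, rfl⟩, rfl⟩
  dsimp only at hw ⊢
  rw [smul_eq_mul, inv_mul_cancel_left₀ hc, add_sub_cancel] at hw
  refine ⟨f a - f x, ⟨f a, hw.1 ha, rfl⟩, ?_⟩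
  calc ‖c • (a - x) - (f a - f x)‖ = ‖f a - f x - (a - x) • c‖ := by
        rw [norm_sub_rev, smul_eq_mul, smul_eq_mul, mul_comm]
    _ ≤ ε * ‖c‖ * ‖a - x‖ := hw.2
    _ = ε * ‖c • (a - x)‖ := by rw [norm_smul]; ring

theorem approxAtZero_image_sub_smul [CompleteSpace 𝕜] (hf : HasStrictDerivAt f c x)
    (hc : c ≠ 0) (hA : ∀ᶠ a in 𝓝 x, f a ∈ A' → a ∈ A) :
    ApproxAtZero ((· - f x) '' A') (c • ((· - x) '' A)) := by
  intro ε hε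
  have hrev : (fun a => a - x) =O[𝓝 x] (fun a => f a - f x) :=
    (HasDerivAtFilter.isTheta_sub hf.hasDerivAt hc).isBigO_symm.comp_tendsto
      (tendsto_id.prodMk tendsto_const_pure)
  have hlin := ((hasDerivAt_iff_isLittleO.1 hf.hasDerivAt).trans_isBigO hrev).def hε
  have hnear : ∀ᶠ b in 𝓝 (f x), b - f x ∈ (· - f x) '' A' →
      ∃ v ∈ c • ((· - x) '' A), ‖b - f x - v‖ ≤ ε * ‖b - f x‖ := by
    rw [← hf.map_nhds_eq hc, eventually_map]
    filter_upwards [hA, hlin] with a ha hle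
    rintro ⟨b, hb, hba⟩
    rw [sub_left_inj] at hba
    refine ⟨c • (a - x), Set.smul_mem_smul_set ⟨a, ha (hba ▸ hb), rfl⟩, ?_⟩
    rwa [smul_eq_mul, mul_comm c]
  have hlim : Tendsto (fun w => f x + w) (𝓝 0) (𝓝 (f x)) :=
    (by fun_prop : Continuous fun w => f x + w).tendsto' 0 (f x) (add_zero _)
  filter_upwards [hlim.eventually hnear] with w hw
  simpa using hw

end Derivative

theorem eventually_mem_iff_apply_mem {X Y : Type*} [TopologicalSpace X] [TopologicalSpace Y]
    {S : X → Y} {U : Set X} {V : Set Y} {A : Set X} {A' : Set Y} {x : X}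
    (hU : IsOpen U) (hV : IsOpen V) (hS : ContinuousAt S x) (hinj : Set.InjOn S U)
    (hsym : S '' (U ∩ A) = V ∩ A') (hx : x ∈ U ∩ A) :
    ∀ᶠ a in 𝓝 x, a ∈ A ↔ S a ∈ A' := by
  have hSx : S x ∈ V := (hsym ▸ Set.mem_image_of_mem S hx).1
  filter_upwards [hU.mem_nhds hx.1, hS.preimage_mem_nhds (hV.mem_nhds hSx)] with a haU haV
  refine ⟨fun ha => (hsym ▸ Set.mem_image_of_mem S ⟨haU, ha⟩ : S a ∈ V ∩ A').2, fun ha => ?_⟩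
  obtain ⟨b, ⟨hbU, hbA⟩, hba⟩ : S a ∈ S '' (U ∩ A) := hsym ▸ ⟨haV, ha⟩
  rwa [← hinj hbU haU hba]

theorem asymp_self_similar_conformal_image_general (A : Set ℂ)
    (U V : Set ℂ) (hU : IsOpen U) (hV : IsOpen V)
    (S : ℂ → ℂ) (hS : DifferentiableOn ℂ S U)
    (hS' : ∀ z ∈ U, deriv S z ≠ 0) (hinj : Set.InjOn S U)
    (hsym : S '' (U ∩ A) = V ∩ A)
    (x : ℂ) (hx : x ∈ U ∩ A)
    (ρ : ℂ) (hρ : 1 < ‖ρ‖)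
    (L : Set ℂ)
    (hL : AsympSelfSimilar ρ L ((fun z => z - x) '' A)) :
    AsympSelfSimilar ρ ((deriv S x) • L) ((fun z => z - S x) '' A) := by
  have hc : deriv S x ≠ 0 := hS' x hx.1
  have hderiv : HasStrictDerivAt S (deriv S x) x :=
    (hS.analyticAt (hU.mem_nhds hx.1)).hasStrictDerivAt
  have hloc : ∀ᶠ a in 𝓝 x, a ∈ A ↔ S a ∈ A :=
    eventually_mem_iff_apply_mem hU hV hderiv.hasDerivAt.continuousAt hinj hsym hx
  exact (hL.smul hc).of_approxAtZero hρ
    (approxAtZero_smul_image_sub hderiv.hasDerivAt hc (hloc.mono fun _ h => h.1))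
    (approxAtZero_image_sub_smul hderiv hc (hloc.mono fun _ h => h.2))

/-- A conformal local symmetry transports asymptotic self-similarity: if A is
asymptotically ρ-self-similar at x with limit model L, then it is
asymptotically ρ-self-similar at S(x) with limit model S'(x)·L. -/
theorem asymp_self_similar_conformal_image (A : Set ℂ) (hA : IsCompact A)
    (U V : Set ℂ) (hU : IsOpen U) (hV : IsOpen V)
    (S : ℂ → ℂ) (hS : DifferentiableOn ℂ S U)
    (hS' : ∀ z ∈ U, deriv S z ≠ 0) (hinj : Set.InjOn S U)
    (hsym : S '' (U ∩ A) = V ∩ A)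
    (x : ℂ) (hx : x ∈ U ∩ A)
    (ρ : ℂ) (hρ : 1 < ‖ρ‖)
    (L : Set ℂ) (h0 : (0 : ℂ) ∈ L)
    (hL : AsympSelfSimilar ρ L ((fun z => z - x) '' A)) :
    AsympSelfSimilar ρ ((deriv S x) • L) ((fun z => z - S x) '' A) :=
  asymp_self_similar_conformal_image_general A U V hU hV S hS hS' hinj hsym x hx ρ hρ L hL
end
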